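/- arXiv:1106.1546 — 6 statements merged into one kernel-verified Lean document; each statement's English description precedes it below -/
import Mathlib

section
/- Let M be a smooth manifold with a Poisson pencil P_λ = P_2 - λP_1 (so P_1, P_2 are compatible Poisson bivectors), and suppose the pencil is exact with Liouville vector field Z, i.e. Lie_Z P_2 = P_1 and Lie_Z P_1 = 0. If H(λ) is a formal Casimir of the pencil, i.e. P_λ dH(λ) = 0, and X_λ = P_1 dH(λ), then X_λ = P_λ dH*(λ) where H*(λ) = -Lie_Z H(λ). -/
/-!
Differentiate the Casimir equation `P_λ dH(λ) = 0` along `Z`. By the Leibniz rule this gives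
`(Lie_Z P_λ) dH(λ) + P_λ d(Lie_Z H(λ)) = 0`, and exactness says `Lie_Z P_λ = P₁ - λ · 0 = P₁`.
-/

namespace PoissonPencil

variable {R Ω X : Type*} [CommRing R] [AddCommGroup Ω] [Module R Ω] [AddCommGroup X] [Module R X]

def lieDeriv (LΩ : Ω →ₗ[R] Ω) (LX : X →ₗ[R] X) : (Ω →ₗ[R] X) →ₗ[R] Ω →ₗ[R] X where
  toFun P := LX ∘ₗ P - P ∘ₗ LΩ
  map_add' P Q := by ext; simp [sub_add_sub_comm]
  map_smul' c P := by ext; simp [smul_sub]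

variable {LΩ : Ω →ₗ[R] Ω} {LX : X →ₗ[R] X}

@[simp]
theorem lieDeriv_apply (P : Ω →ₗ[R] X) (ω : Ω) :
    lieDeriv LΩ LX P ω = LX (P ω) - P (LΩ ω) :=
  rfl

theorem lieDeriv_pencil {P₁ P₂ : Ω →ₗ[R] X} (h₂ : lieDeriv LΩ LX P₂ = P₁)
    (h₁ : lieDeriv LΩ LX P₁ = 0) (l : R) : lieDeriv LΩ LX (P₂ - l • P₁) = P₁ := by
  rw [map_sub, map_smul, h₂, h₁, smul_zero, sub_zero]

theorem lieDeriv_apply_eq_neg_of_apply_eq_zero {P : Ω →ₗ[R] X} {ω : Ω} (hω : P ω = 0) :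
    lieDeriv LΩ LX P ω = P (-LΩ ω) := by
  rw [lieDeriv_apply, hω, map_zero, zero_sub, map_neg]

end PoissonPencil

/-- We model functions `F`, 1-forms `Ω` and vector fields `X` abstractly; the Lie derivative
of a bivector `P` along `Z` is encoded by the Leibniz rule
`(Lie_Z P) ω = Lie_Z (P ω) - P (Lie_Z ω)`, so exactness reads as `hexact1`, `hexact2`. -/
theorem stmt0
    (F Ω X : Type*) [AddCommGroup F] [Module ℝ F] [AddCommGroup Ω] [Module ℝ Ω]
    [AddCommGroup X] [Module ℝ X]
    (d : F →ₗ[ℝ] Ω)                 -- exterior differential on functions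
    (P₁ P₂ : Ω →ₗ[ℝ] X)             -- the two compatible Poisson bivectors of the pencil
    (LieZF : F →ₗ[ℝ] F)             -- Lie derivative along Z on functions
    (LieZΩ : Ω →ₗ[ℝ] Ω)             -- Lie derivative along Z on 1-forms
    (LieZX : X →ₗ[ℝ] X)             -- Lie derivative along Z on vector fields
    -- the Lie derivative commutes with the differential d
    (hdL : ∀ f : F, LieZΩ (d f) = d (LieZF f))
    -- exactness: Lie_Z P₂ = P₁ and Lie_Z P₁ = 0 (bivector Lie derivative via Leibniz rule)
    (hexact2 : ∀ ω : Ω, LieZX (P₂ ω) - P₂ (LieZΩ ω) = P₁ ω)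
    (hexact1 : ∀ ω : Ω, LieZX (P₁ ω) - P₁ (LieZΩ ω) = 0)
    -- H(λ): a (formal) Casimir of the pencil:  (P₂ - λ P₁) dH(λ) = 0
    (H : ℝ → F)
    (hCasimir : ∀ l : ℝ, P₂ (d (H l)) - l • P₁ (d (H l)) = 0) :
    -- X_λ := P₁ dH(λ) satisfies X_λ = (P₂ - λ P₁) d H*(λ) with H*(λ) = -Lie_Z H(λ)
    ∀ l : ℝ, P₁ (d (H l)) =
      P₂ (d (-(LieZF (H l)))) - l • P₁ (d (-(LieZF (H l)))) := by
  intro l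
  have hLie₂ : PoissonPencil.lieDeriv LieZΩ LieZX P₂ = P₁ := LinearMap.ext hexact2
  have hLie₁ : PoissonPencil.lieDeriv LieZΩ LieZX P₁ = 0 := LinearMap.ext hexact1
  have hCas : (P₂ - l • P₁) (d (H l)) = 0 := hCasimir l
  have key :=
    PoissonPencil.lieDeriv_apply_eq_neg_of_apply_eq_zero (LΩ := LieZΩ) (LX := LieZX) hCas
  rwa [PoissonPencil.lieDeriv_pencil hLie₂ hLie₁, hdL, ← map_neg] at key
end

section
/- Let N be a (1,1)-tensor field on a manifold M with vanishing Nijenhuis torsion, i.e. [NW, NX] = N[NW, X] + N[W, NX] - N²[W, X] for all vector fields W, X. If Z is a vector field with Lie_Z N = Id (the identity endomorphism), then the vector field Y₀ = NZ satisfies Lie_{Y₀} N = N, i.e. Y₀ is a conformal symmetry of N. -/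
section LieDerivative

variable {R L : Type*} [CommRing R] [LieRing L] [LieAlgebra R L]

def lieDerivEndo (Y : L) (N : L →ₗ[R] L) (V : L) : L :=
  ⁅Y, N V⁆ - N ⁅Y, V⁆

theorem lieDerivEndo_eq_map_lieDerivEndo_of_nijenhuis {N : L →ₗ[R] L}
    (htorsion : ∀ W V : L, ⁅N W, N V⁆ = N ⁅N W, V⁆ + N ⁅W, N V⁆ - N (N ⁅W, V⁆))
    (W V : L) : lieDerivEndo (N W) N V = N (lieDerivEndo W N V) := by
  rw [lieDerivEndo, lieDerivEndo, htorsion, map_sub]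
  abel

end LieDerivative

/-- If `N` is a (1,1)-tensor with vanishing Nijenhuis torsion and `Z` is a
vector field with `Lie_Z N = Id`, then `Y₀ = NZ` is a conformal symmetry: `Lie_{Y₀} N = N`.
Vector fields are modelled as a Lie algebra `X` over `ℝ`, the (1,1)-tensor as an
`ℝ`-linear endomorphism, and `(Lie_Y N)(V) = ⁅Y, N V⁆ - N ⁅Y, V⁆`. -/
theorem stmt1 (X : Type*) [LieRing X] [LieAlgebra ℝ X]
    (N : X →ₗ[ℝ] X) (Z : X)
    -- vanishing Nijenhuis torsion
    (htorsion : ∀ W V : X, ⁅N W, N V⁆ = N ⁅N W, V⁆ + N ⁅W, N V⁆ - N (N ⁅W, V⁆))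
    -- Lie_Z N = Id
    (hZ : ∀ V : X, ⁅Z, N V⁆ - N ⁅Z, V⁆ = V) :
    -- Lie_{NZ} N = N
    ∀ V : X, ⁅N Z, N V⁆ - N ⁅N Z, V⁆ = N V := fun V => by
  simpa only [lieDerivEndo, hZ V] using
    lieDerivEndo_eq_map_lieDerivEndo_of_nijenhuis htorsion Z V
end

section
/- Let N be a (1,1)-tensor field with vanishing Nijenhuis torsion on a manifold M and let Z be a vector field satisfying Lie_Z N = Id. Define Y_j = N^{j+1} Z for integers j ≥ -1 (so Y_{-1} = Z). Then the commutation relations [Y_j, Y_k] = (k - j) Y_{j+k} hold for all j, k ≥ -1, i.e. the fields Y_j form a representation of the pronilpotent part of the Virasoro algebra. -/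
/-!
Writing `ℒ_W N` for `V ↦ ⁅W, N V⁆ - N ⁅W, V⁆`, vanishing torsion says `ℒ_{N W} N = N ∘ ℒ_W N`,
so `ℒ_Z N = 1` propagates to `ℒ_{N^a Z} N = N^a`. Hence
`⁅N^a Z, N^(b+1) Z⁆ = N ⁅N^a Z, N^b Z⁆ + N^(a+b) Z`, and induction on `b` gives
`⁅N^a Z, N^b Z⁆ = (b - a) N^(a+b-1) Z`, first for `a = 0` and then, via antisymmetry, for all `a`.
-/

namespace Nijenhuis

variable {R L : Type*} [Semiring R] [LieRing L] [Module R L] {N : Module.End R L} {Z : L}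

variable (htorsion : ∀ W V : L, ⁅N W, N V⁆ = N ⁅N W, V⁆ + N ⁅W, N V⁆ - N (N ⁅W, V⁆))
  (hZ : ∀ V : L, ⁅Z, N V⁆ - N ⁅Z, V⁆ = V)
include htorsion hZ

theorem lie_pow_apply_apply (a : ℕ) (V : L) :
    ⁅(N ^ a) Z, N V⁆ = N ⁅(N ^ a) Z, V⁆ + (N ^ a) V := by
  induction a generalizing V with
  | zero => simpa [sub_eq_iff_eq_add'] using hZ V
  | succ a ih =>
    rw [pow_succ', Module.End.mul_apply, Module.End.mul_apply, htorsion, ih, map_add]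
    abel

theorem lie_pow_apply_pow_succ_apply (a b : ℕ) :
    ⁅(N ^ a) Z, (N ^ (b + 1)) Z⁆ = N ⁅(N ^ a) Z, (N ^ b) Z⁆ + (N ^ (a + b)) Z := by
  rw [pow_succ', Module.End.mul_apply, lie_pow_apply_apply htorsion hZ, pow_add,
    Module.End.mul_apply]

-- At `a = b = 0` the coefficient vanishes, so the truncated exponent `a + b - 1` does no harm.
theorem lie_pow_apply_pow_apply_of_lie_self {a : ℕ}
    (h₀ : ⁅(N ^ a) Z, Z⁆ = -(a : ℤ) • (N ^ (a - 1)) Z) (b : ℕ) :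
    ⁅(N ^ a) Z, (N ^ b) Z⁆ = ((b : ℤ) - a) • (N ^ (a + b - 1)) Z := by
  induction b with
  | zero => simpa using h₀
  | succ b ih =>
    rw [lie_pow_apply_pow_succ_apply htorsion hZ, ih, map_zsmul]
    obtain h | h := Nat.eq_zero_or_pos (a + b)
    · obtain ⟨rfl, rfl⟩ := Nat.add_eq_zero_iff.mp h
      simp
    · rw [← Module.End.mul_apply, ← pow_succ', Nat.sub_add_cancel h,
        show a + (b + 1) - 1 = a + b by omega]
      push_cast
      rw [add_sub_right_comm, add_smul, one_smul]

theorem lie_apply_pow_apply (b : ℕ) : ⁅Z, (N ^ b) Z⁆ = (b : ℤ) • (N ^ (b - 1)) Z := by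
  simpa using lie_pow_apply_pow_apply_of_lie_self (a := 0) htorsion hZ (by simp) b

theorem lie_pow_apply_pow_apply (a b : ℕ) :
    ⁅(N ^ a) Z, (N ^ b) Z⁆ = ((b : ℤ) - a) • (N ^ (a + b - 1)) Z :=
  lie_pow_apply_pow_apply_of_lie_self htorsion hZ
    (by rw [← lie_skew, lie_apply_pow_apply htorsion hZ, neg_smul]) b

end Nijenhuis

/-- With `N` torsionless and `Lie_Z N = Id`, the fields `Y_j = N^(j+1) Z`
(`j ≥ -1`, so `Y_{-1} = Z`) satisfy the Virasoro commutation relations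
`[Y_j, Y_k] = (k - j)·Y_{j+k}`. -/
theorem stmt3 (X : Type*) [LieRing X] [LieAlgebra ℝ X]
    (N : X →ₗ[ℝ] X) (Z : X)
    (htorsion : ∀ W V : X, ⁅N W, N V⁆ = N ⁅N W, V⁆ + N ⁅W, N V⁆ - N (N ⁅W, V⁆))
    (hZ : ∀ V : X, ⁅Z, N V⁆ - N ⁅Z, V⁆ = V)
    (Y : ℤ → X) (hY : ∀ j : ℤ, -1 ≤ j → Y j = (N ^ (j + 1).toNat) Z) :
    ∀ j k : ℤ, -1 ≤ j → -1 ≤ k → ⁅Y j, Y k⁆ = (k - j) • Y (j + k) := by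
  intro j k hj hk
  obtain hjk | hjk := lt_or_ge (j + k) (-1)
  · obtain ⟨rfl, rfl⟩ : j = -1 ∧ k = -1 := by omega
    simp
  rw [hY j hj, hY k hk, hY (j + k) hjk, Nijenhuis.lie_pow_apply_pow_apply htorsion hZ,
    show (j + 1).toNat + (k + 1).toNat - 1 = (j + k + 1).toNat by omega]
  congr 1
  omega
end

section
/- Consider on ℝⁿ (with coordinates u¹,...,uⁿ) a pair of diagonal contravariant metrics g₁^{ij} = f^i δ^{ij} and g₂^{ij} = u^i f^i δ^{ij} with all f^i nonvanishing. Let Z be a vector field such that Lie_Z g₁ = 0 and Lie_Z g₂ = g₁ (Lie derivatives of the contravariant metrics, so (Lie_Z g)^{ij} = Z^k ∂_k g^{ij} - ∂_k Z^i g^{kj} - ∂_k Z^j g^{ik}). Then Z^i = 1 for all i, and consequently Σ_{k=1}^n ∂f^i/∂u^k = 0 for all i. -/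
open scoped BigOperators

/-- partial derivative of `h : ℝⁿ → ℝ` in the `i`-th coordinate direction -/
noncomputable def pd {n : ℕ} (i : Fin n) (h : (Fin n → ℝ) → ℝ) (u : Fin n → ℝ) : ℝ :=
  fderiv ℝ h u (Pi.single i 1)

/-- the diagonal contravariant metric `g₁^{ij} = f^i δ^{ij}` -/
noncomputable def g1 {n : ℕ} (f : Fin n → (Fin n → ℝ) → ℝ) (i j : Fin n)
    (u : Fin n → ℝ) : ℝ :=
  if i = j then f i u else 0

/-- the diagonal contravariant metric `g₂^{ij} = u^i f^i δ^{ij}` -/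
noncomputable def g2 {n : ℕ} (f : Fin n → (Fin n → ℝ) → ℝ) (i j : Fin n)
    (u : Fin n → ℝ) : ℝ :=
  if i = j then u i * f i u else 0

/-- Lie derivative of a contravariant 2-tensor `g` along `Z`:
`(Lie_Z g)^{ij} = Z^k ∂_k g^{ij} - ∂_k Z^i g^{kj} - ∂_k Z^j g^{ik}` -/
noncomputable def lieD {n : ℕ} (Z : Fin n → (Fin n → ℝ) → ℝ)
    (g : Fin n → Fin n → (Fin n → ℝ) → ℝ) (i j : Fin n) (u : Fin n → ℝ) : ℝ :=
  (∑ k, Z k u * pd k (g i j) u) - (∑ k, pd k (Z i) u * g k j u)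
    - (∑ k, pd k (Z j) u * g i k u)

lemma pd_coord {n : ℕ} (i k : Fin n) (u : Fin n → ℝ) :
    pd k (fun v => v i) u = if i = k then 1 else 0 := by
  have h : fderiv ℝ (fun v : Fin n → ℝ => v i) u
      = (ContinuousLinearMap.proj i : (Fin n → ℝ) →L[ℝ] ℝ) :=
    (ContinuousLinearMap.proj i : (Fin n → ℝ) →L[ℝ] ℝ).fderiv
  simp [pd, h, Pi.single_apply]

lemma g1_diag {n : ℕ} (f : Fin n → (Fin n → ℝ) → ℝ) (i : Fin n) : g1 f i i = f i := by
  funext v; simp [g1]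

lemma pd_g2_diag {n : ℕ} (f : Fin n → (Fin n → ℝ) → ℝ) (i k : Fin n)
    (hf : ContDiff ℝ (⊤ : ℕ∞) (f i)) (u : Fin n → ℝ) :
    pd k (g2 f i i) u = (if i = k then f i u else 0) + u i * pd k (f i) u := by
  have hdi : DifferentiableAt ℝ (fun v : Fin n → ℝ => v i) u :=
    (ContinuousLinearMap.proj i : (Fin n → ℝ) →L[ℝ] ℝ).differentiableAt
  have hdf : DifferentiableAt ℝ (f i) u := (hf.differentiable (by simp)).differentiableAt
  have hg : g2 f i i = fun v => v i * f i v := by funext v; simp [g2]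
  have hc := pd_coord i k u
  rw [hg]
  unfold pd at hc ⊢
  rw [fderiv_fun_mul hdi hdf]
  simp only [ContinuousLinearMap.add_apply, ContinuousLinearMap.smul_apply, smul_eq_mul]
  rw [hc]
  split_ifs <;> ring

lemma lie_g1_diag {n : ℕ} (f Z : Fin n → (Fin n → ℝ) → ℝ) (i : Fin n) (u : Fin n → ℝ) :
    lieD Z (g1 f) i i u
      = (∑ k, Z k u * pd k (f i) u) - 2 * (pd i (Z i) u * f i u) := by
  unfold lieD
  rw [g1_diag]
  have h2 : (∑ k, pd k (Z i) u * g1 f k i u) = pd i (Z i) u * f i u := by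
    rw [Finset.sum_eq_single i]
    · simp [g1]
    · intro b _ hb; simp [g1, hb]
    · simp
  have h3 : (∑ k, pd k (Z i) u * g1 f i k u) = pd i (Z i) u * f i u := by
    rw [Finset.sum_eq_single i]
    · simp [g1]
    · intro b _ hb; simp [g1, Ne.symm hb]
    · simp
  rw [h2, h3]; ring

lemma lie_g2_diag {n : ℕ} (f Z : Fin n → (Fin n → ℝ) → ℝ) (i : Fin n)
    (hf : ContDiff ℝ (⊤ : ℕ∞) (f i)) (u : Fin n → ℝ) :
    lieD Z (g2 f) i i u
      = Z i u * f i u + u i * (∑ k, Z k u * pd k (f i) u)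
        - 2 * (pd i (Z i) u * (u i * f i u)) := by
  unfold lieD
  have h1 : (∑ k, Z k u * pd k (g2 f i i) u)
      = Z i u * f i u + u i * (∑ k, Z k u * pd k (f i) u) := by
    have : ∀ k : Fin n, Z k u * pd k (g2 f i i) u
        = Z k u * (if i = k then f i u else 0) + u i * (Z k u * pd k (f i) u) := by
      intro k; rw [pd_g2_diag f i k hf u]; ring
    rw [Finset.sum_congr rfl (fun k _ => this k), Finset.sum_add_distrib, ← Finset.mul_sum]
    congr 1
    rw [Finset.sum_eq_single i]
    · simp
    · intro b _ hb; simp [Ne.symm hb]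
    · simp
  have h2 : (∑ k, pd k (Z i) u * g2 f k i u) = pd i (Z i) u * (u i * f i u) := by
    rw [Finset.sum_eq_single i]
    · simp [g2]
    · intro b _ hb; simp [g2, hb]
    · simp
  have h3 : (∑ k, pd k (Z i) u * g2 f i k u) = pd i (Z i) u * (u i * f i u) := by
    rw [Finset.sum_eq_single i]
    · simp [g2]
    · intro b _ hb; simp [g2, Ne.symm hb]
    · simp
  rw [h1, h2, h3]; ring

/-- if `Lie_Z g₁ = 0` and `Lie_Z g₂ = g₁` for the diagonal metrics
`g₁^{ij} = f^i δ^{ij}`, `g₂^{ij} = u^i f^i δ^{ij}` with `f^i` nonvanishing, then `Z^i = 1`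
for all `i` and consequently `∑_k ∂f^i/∂u^k = 0` for all `i`. -/
theorem stmt5 (n : ℕ) (f Z : Fin n → (Fin n → ℝ) → ℝ)
    (hf : ∀ i, ContDiff ℝ (⊤ : ℕ∞) (f i)) (hZ : ∀ i, ContDiff ℝ (⊤ : ℕ∞) (Z i))
    (hfne : ∀ i u, f i u ≠ 0)
    (hL1 : ∀ i j u, lieD Z (g1 f) i j u = 0)
    (hL2 : ∀ i j u, lieD Z (g2 f) i j u = g1 f i j u) :
    (∀ i u, Z i u = 1) ∧ (∀ i u, ∑ k, pd k (f i) u = 0) := by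
  have hZ1 : ∀ i u, Z i u = 1 := by
    intro i u
    have h1 := hL1 i i u
    have h2 := hL2 i i u
    rw [lie_g1_diag] at h1
    rw [lie_g2_diag f Z i (hf i) u] at h2
    simp only [g1, eq_self_iff_true, if_true] at h2
    have key : Z i u * f i u = 1 * f i u := by linear_combination h2 - u i * h1
    exact mul_right_cancel₀ (hfne i u) key
  refine ⟨hZ1, ?_⟩
  intro i u
  have hZc : pd i (Z i) u = 0 := by
    have : Z i = fun _ => (1 : ℝ) := funext fun v => hZ1 i v
    simp [pd, this]
  have h1 := hL1 i i u
  rw [lie_g1_diag] at h1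
  rw [hZc] at h1
  have : (∑ k, Z k u * pd k (f i) u) = ∑ k, pd k (f i) u := by
    apply Finset.sum_congr rfl
    intro k _; rw [hZ1 k u, one_mul]
  linarith [h1, this]
end

section
/- For the two-component Camassa–Holm pencil, with g_λ as in the AKNS case (g_λ^{11} = 2u, g_λ^{12} = v - λ, g_λ^{22} = -2) and A_λ = λ² g_λ / det(g_λ), the central invariants c_i = -(1/(3f^i)) Res_{λ=u^i} Tr(g_λ^{-1}A_λ) equal c_i = -(u^i)²/12 for i = 1, 2, where u^{1,2} = v ± √(-4u) (u < 0) and f¹ = 8/(u²-u¹), f² = 8/(u¹-u²). -/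
/-! The determinant `det g_λ = -4u - (v-λ)²` factors as `(u¹ - λ)(λ - u²)`, so
`Tr(g_λ⁻¹A_λ) = 2λ²/det g_λ` has simple poles at the canonical coordinates, with residue
`2(u^i)²/(u^j - u^i)` at `u^i` (`j ≠ i`). Since `f^i = 8/(u^j - u^i)`, the factor
`u^j - u^i` cancels in `-(1/(3f^i)) Res`, leaving `-(u^i)²/12`. -/

open scoped Topology
open Filter

theorem sq_sub_sub_sq_eq_mul {d s : ℝ} (hs : s ^ 2 = d) (v l : ℝ) :
    d - (v - l) ^ 2 = (v + s - l) * (l - (v - s)) := by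
  rw [← hs]; ring

theorem tendsto_sub_mul_div_mul_nhdsNE {p : ℝ → ℝ} {a b : ℝ} (hp : ContinuousAt p a)
    (hab : a ≠ b) :
    Tendsto (fun l => (l - a) * (p l / ((a - l) * (l - b)))) (𝓝[≠] a) (𝓝 (p a / (b - a))) := by
  have hlim : Tendsto (fun l => p l / (b - l)) (𝓝[≠] a) (𝓝 (p a / (b - a))) :=
    (hp.div (continuous_const.sub continuous_id).continuousAt (sub_ne_zero.mpr hab.symm)).tendsto
      |>.mono_left nhdsWithin_le_nhds
  refine hlim.congr' ?_
  filter_upwards [self_mem_nhdsWithin,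
    eventually_nhdsWithin_of_eventually_nhds (eventually_ne_nhds hab)] with l hla hlb
  have hal : a - l ≠ 0 := sub_ne_zero.mpr (Ne.symm hla)
  have hbl : b - l ≠ 0 := sub_ne_zero.mpr (Ne.symm hlb)
  field_simp
  ring

theorem neg_one_div_three_mul_eight_div_mul_eq {a b : ℝ} (hab : a ≠ b) :
    -(1 / (3 * (8 / (b - a)))) * (2 * a ^ 2 / (b - a)) = -(a ^ 2) / 12 := by
  have hba : b - a ≠ 0 := sub_ne_zero.mpr hab.symm
  field_simp
  ring

/-- for the two-component Camassa–Holm pencil, with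
`A_λ = λ² g_λ/det g_λ` so that `Tr(g_λ⁻¹A_λ) = 2λ²/det g_λ`, `det g_λ = -4u - (v-λ)²`,
canonical coordinates `u^{1,2} = v ± √(-4u)` (`u < 0`), `f¹ = 8/(u²-u¹)`,
`f² = 8/(u¹-u²)`, the central invariants `c_i = -(1/(3f^i)) Res_{λ=u^i} Tr(g_λ⁻¹A_λ)`
equal `c_i = -(u^i)²/12`. -/
theorem stmt12 (u v : ℝ) (hu : u < 0) :
    let u1 := v + Real.sqrt (-(4*u))
    let u2 := v - Real.sqrt (-(4*u))
    let f1 := 8 / (u2 - u1)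
    let f2 := 8 / (u1 - u2)
    ∃ R1 R2 : ℝ,
      Tendsto (fun l => (l - u1) * (2 * l^2 / (-(4*u) - (v - l)^2))) (𝓝[≠] u1) (𝓝 R1) ∧
      Tendsto (fun l => (l - u2) * (2 * l^2 / (-(4*u) - (v - l)^2))) (𝓝[≠] u2) (𝓝 R2) ∧
      -(1/(3*f1)) * R1 = -(u1^2)/12 ∧
      -(1/(3*f2)) * R2 = -(u2^2)/12 := by
  intro u1 u2 f1 f2
  have hsq : Real.sqrt (-(4*u)) ^ 2 = -(4*u) := Real.sq_sqrt (by linarith)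
  have hne : u1 ≠ u2 := by
    have : 0 < Real.sqrt (-(4*u)) := Real.sqrt_pos.mpr (by linarith)
    simp only [u1, u2]
    linarith
  have hdet (l : ℝ) : -(4*u) - (v - l)^2 = (u1 - l) * (l - u2) := sq_sub_sub_sq_eq_mul hsq v l
  have hdet' (l : ℝ) : -(4*u) - (v - l)^2 = (u2 - l) * (l - u1) := by
    rw [hdet]; ring
  have hp : Continuous fun l : ℝ => 2 * l ^ 2 := by fun_prop
  refine ⟨2 * u1^2 / (u2 - u1), 2 * u2^2 / (u1 - u2), ?_, ?_,
    neg_one_div_three_mul_eight_div_mul_eq hne, neg_one_div_three_mul_eight_div_mul_eq hne.symm⟩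
  · simp_rw [hdet]
    exact tendsto_sub_mul_div_mul_nhdsNE hp.continuousAt hne
  · simp_rw [hdet']
    exact tendsto_sub_mul_div_mul_nhdsNE hp.continuousAt hne.symm
end

section
/- In a graded Lie algebra, suppose ω₁, ω₂, and P = Σ_{k≥1} ε^{2k} P^{(2k)} (formal series) satisfy: [ω₁,ω₁] = [ω₂,ω₂] = [ω₁,ω₂] = 0, [ω₂ + P, ω₂ + P] = 0, and e satisfies [e,ω₁] = 0, [e,ω₂] = ω₁. If [e, P^{(2k)}] = 0 for k = 1,...,N, then the element X = [e, P^{(2N+2)}] satisfies [ω₁, X] = 0 and [ω₂, X] = 0. -/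
/-!
Since `L_e = [e, ·]` is a derivation of the bracket, `[e, ω₁] = 0` makes `L_e` commute with
`d_{ω₁}`, and `[e, ω₂] = ω₁` gives `d_{ω₂} L_e = L_e d_{ω₂} - d_{ω₁}`. Applied to
`P^{(2N+2)}`, which is `d_{ω₁}`-closed, this proves the first claim and reduces the second
to `L_e [ω₂, P^{(2N+2)}] = 0`.
By the order-`ε^{2N+2}` Poisson condition, `2 [ω₂, P^{(2N+2)}]` is minus a sum of brackets
`[P^{(2k)}, P^{(2N+2-2k)}]` with `1 ≤ k ≤ N`; `L_e` kills both entries, hence, being a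
derivation, the whole sum.
-/

open Finset

section Leibniz

variable {R V B T : Type*} [CommRing R]
  [AddCommGroup V] [Module R V] [AddCommGroup B] [Module R B] [AddCommGroup T] [Module R T]

def IsLeibniz (adVB : V →ₗ[R] B →ₗ[R] B) (adVT : V →ₗ[R] T →ₗ[R] T)
    (br : B →ₗ[R] B →ₗ[R] T) : Prop :=
  ∀ (z : V) (b₁ b₂ : B), adVT z (br b₁ b₂) = br (adVB z b₁) b₂ + br b₁ (adVB z b₂)

variable {adVB : V →ₗ[R] B →ₗ[R] B} {adVT : V →ₗ[R] T →ₗ[R] T} {br : B →ₗ[R] B →ₗ[R] T}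

namespace IsLeibniz

theorem br_adVB_of_adVB_eq_zero (h : IsLeibniz adVB adVT br) {e : V} {ω : B}
    (he : adVB e ω = 0) (b : B) : br ω (adVB e b) = adVT e (br ω b) := by
  rw [h, he, map_zero, LinearMap.zero_apply, zero_add]

theorem br_adVB_of_adVB_eq (h : IsLeibniz adVB adVT br) {e : V} {ω₁ ω₂ : B}
    (he : adVB e ω₂ = ω₁) (b : B) : br ω₂ (adVB e b) = adVT e (br ω₂ b) - br ω₁ b := by
  rw [h, he, add_sub_cancel_left]

theorem adVT_br_eq_zero (h : IsLeibniz adVB adVT br) {e : V} {b₁ b₂ : B}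
    (h₁ : adVB e b₁ = 0) (h₂ : adVB e b₂ = 0) : adVT e (br b₁ b₂) = 0 := by
  rw [h, h₁, h₂, map_zero, map_zero, LinearMap.zero_apply, add_zero]

end IsLeibniz

end Leibniz

theorem stmt15_general (V B T : Type*)
    [AddCommGroup V] [Module ℝ V] [AddCommGroup B] [Module ℝ B]
    [AddCommGroup T] [Module ℝ T]
    (adVB : V →ₗ[ℝ] B →ₗ[ℝ] B) (adVT : V →ₗ[ℝ] T →ₗ[ℝ] T)
    (br : B →ₗ[ℝ] B →ₗ[ℝ] T)
    -- graded Jacobi identity: [v,[b₁,b₂]] = [[v,b₁],b₂] + [b₁,[v,b₂]]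
    (hjac : ∀ (z : V) (b₁ b₂ : B),
      adVT z (br b₁ b₂) = br (adVB z b₁) b₂ + br b₁ (adVB z b₂))
    (ω₁ ω₂ : B) (e : V) (P : ℕ → B) (N : ℕ)
    (he1 : adVB e ω₁ = 0) (he2 : adVB e ω₂ = ω₁)
    -- the deformation is compatible with ω₁: [ω₁, P^{(2m)}] = 0
    (hP1 : ∀ m, 1 ≤ m → br ω₁ (P m) = 0)
    -- [ω₂ + P, ω₂ + P] = 0 at order ε^{2m}:
    -- 2[ω₂, P^{(2m)}] + ∑_{k=1}^{m-1} [P^{(2k)}, P^{(2m-2k)}] = 0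
    (horder : ∀ m, 1 ≤ m →
      (2 : ℝ) • br ω₂ (P m) + ∑ k ∈ Finset.Ico 1 m, br (P k) (P (m - k)) = 0)
    -- exactness up to order 2N: [e, P^{(2k)}] = 0, k = 1, …, N
    (heP : ∀ k, 1 ≤ k → k ≤ N → adVB e (P k) = 0) :
    br ω₁ (adVB e (P (N + 1))) = 0 ∧ br ω₂ (adVB e (P (N + 1))) = 0 := by
  have hjac : IsLeibniz adVB adVT br := hjac
  have hsum : adVT e (∑ k ∈ Ico 1 (N + 1), br (P k) (P (N + 1 - k))) = 0 := by
    rw [map_sum]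
    refine sum_eq_zero fun k hk => ?_
    obtain ⟨hk₁, hk₂⟩ := mem_Ico.mp hk
    exact hjac.adVT_br_eq_zero (heP k hk₁ (by omega)) (heP _ (by omega) (by omega))
  have hω₂P : adVT e (br ω₂ (P (N + 1))) = 0 := by
    have h := congrArg (adVT e) (horder (N + 1) N.succ_pos)
    rw [map_add, map_smul, hsum, add_zero, map_zero] at h
    exact (smul_eq_zero.mp h).resolve_left two_ne_zero
  constructor
  · rw [hjac.br_adVB_of_adVB_eq_zero he1, hP1 _ N.succ_pos, map_zero]
  · rw [hjac.br_adVB_of_adVB_eq he2, hω₂P, hP1 _ N.succ_pos, sub_zero]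

/-- graded Lie algebra setting, with `V` the (even) degree of vector
fields, `B` that of bivectors, `T` that of trivectors; `adVB`/`adVT` is the bracket
(Lie derivative) `[v, ·]` on bivectors/trivectors, and `br` is the (symmetric, in the
Schouten convention for odd elements) bracket of two bivectors. If
`[ω₁,ω₁] = [ω₂,ω₂] = [ω₁,ω₂] = 0`, `[e,ω₁] = 0`, `[e,ω₂] = ω₁`, the deformed structure
`ω₂ + ∑_{k≥1} ε^{2k} P^{(2k)}` is Poisson for the pencil (conditions `hP1`, `horder`,
order by order in `ε`), and `[e, P^{(2k)}] = 0` for `k = 1, …, N`, then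
`X = [e, P^{(2N+2)}]` satisfies `[ω₁, X] = 0` and `[ω₂, X] = 0`. -/
theorem stmt15 (V B T : Type*)
    [AddCommGroup V] [Module ℝ V] [AddCommGroup B] [Module ℝ B]
    [AddCommGroup T] [Module ℝ T]
    (adVB : V →ₗ[ℝ] B →ₗ[ℝ] B) (adVT : V →ₗ[ℝ] T →ₗ[ℝ] T)
    (br : B →ₗ[ℝ] B →ₗ[ℝ] T)
    -- Schouten bracket of two bivectors is symmetric
    (hsym : ∀ b₁ b₂ : B, br b₁ b₂ = br b₂ b₁)
    -- graded Jacobi identity: [v,[b₁,b₂]] = [[v,b₁],b₂] + [b₁,[v,b₂]]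
    (hjac : ∀ (z : V) (b₁ b₂ : B),
      adVT z (br b₁ b₂) = br (adVB z b₁) b₂ + br b₁ (adVB z b₂))
    (ω₁ ω₂ : B) (e : V) (P : ℕ → B) (N : ℕ)
    (h11 : br ω₁ ω₁ = 0) (h22 : br ω₂ ω₂ = 0) (h12 : br ω₁ ω₂ = 0)
    (he1 : adVB e ω₁ = 0) (he2 : adVB e ω₂ = ω₁)
    -- the deformation is compatible with ω₁: [ω₁, P^{(2m)}] = 0
    (hP1 : ∀ m, 1 ≤ m → br ω₁ (P m) = 0)
    -- [ω₂ + P, ω₂ + P] = 0 at order ε^{2m}: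
    -- 2[ω₂, P^{(2m)}] + ∑_{k=1}^{m-1} [P^{(2k)}, P^{(2m-2k)}] = 0
    (horder : ∀ m, 1 ≤ m →
      (2 : ℝ) • br ω₂ (P m) + ∑ k ∈ Finset.Ico 1 m, br (P k) (P (m - k)) = 0)
    -- exactness up to order 2N: [e, P^{(2k)}] = 0, k = 1, …, N
    (heP : ∀ k, 1 ≤ k → k ≤ N → adVB e (P k) = 0) :
    br ω₁ (adVB e (P (N + 1))) = 0 ∧ br ω₂ (adVB e (P (N + 1))) = 0 :=
  stmt15_general V B T adVB adVT br hjac ω₁ ω₂ e P N he1 he2 hP1 horder heP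
end
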